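/- Inevitability of nimbers (case 2): if P1 + P2 is a losing position, then the Grundy values of P1 and P2 are equal, and the Grundy value of P1 equals the mex of the Grundy values of all options P1' of P1 (which can each be recovered from the corresponding winning subsums P1' + P2). -/

import Mathlib

universe u

/-- Nimbers, as in the older Mathlib: a type synonym of `Ordinal` with its order. -/
def Nimber : Type (u + 1) := Ordinal.{u}

noncomputable instance : ConditionallyCompleteLinearOrderBot Nimber.{u} :=
  inferInstanceAs (ConditionallyCompleteLinearOrderBot Ordinal.{u})

namespace SetTheory

/-- Pre-games, as in the older Mathlib. -/
inductive PGame : Type (u + 1)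
  | mk : ∀ α β : Type u, (α → PGame) → (β → PGame) → PGame

namespace PGame

def LeftMoves : PGame → Type u
  | mk l _ _ _ => l

def RightMoves : PGame → Type u
  | mk _ r _ _ => r

def moveLeft : ∀ g : PGame, LeftMoves g → PGame
  | mk _ _ L _ => L

def moveRight : ∀ g : PGame, RightMoves g → PGame
  | mk _ _ _ R => R

/-- The pair (x ≤ y, x ⧏ y), by simultaneous recursion. -/
noncomputable def leLF (x : PGame.{u}) : PGame.{u} → Prop × Prop := by
  induction x with | mk xl xr xL xR IHxl IHxr => ?_
  intro y
  induction y with | mk yl yr yL yR IHyl IHyr => ?_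
  exact ((∀ i, (IHxl i (mk yl yr yL yR)).2) ∧ ∀ j, (IHyr j).2,
    (∃ i, (IHyl i).1) ∨ ∃ j, (IHxr j (mk yl yr yL yR)).1)

noncomputable instance : LE PGame.{u} :=
  ⟨fun x y => (leLF x y).1⟩

def Equiv (x y : PGame.{u}) : Prop :=
  x ≤ y ∧ y ≤ x

instance : HasEquiv PGame.{u} :=
  ⟨Equiv⟩

instance : Zero PGame.{u} :=
  ⟨mk PEmpty PEmpty PEmpty.elim PEmpty.elim⟩

noncomputable def neg (x : PGame.{u}) : PGame.{u} := by
  induction x with | mk xl xr _ _ IHxl IHxr => ?_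
  exact mk xr xl IHxr IHxl

noncomputable instance : Neg PGame.{u} :=
  ⟨neg⟩

noncomputable def add (x : PGame.{u}) : PGame.{u} → PGame.{u} := by
  induction x with | mk xl xr _ _ IHxl IHxr => ?_
  intro y
  induction y with | mk yl yr yL yR IHyl IHyr => ?_
  exact mk (xl ⊕ yl) (xr ⊕ yr) (Sum.rec (fun i => IHxl i (mk yl yr yL yR)) IHyl)
    (Sum.rec (fun i => IHxr i (mk yl yr yL yR)) IHyr)

noncomputable instance : Add PGame.{u} :=
  ⟨add⟩

def ImpartialAux (x : PGame.{u}) : Prop := by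
  induction x with | mk xl xr xL xR IHxl IHxr => ?_
  exact (mk xl xr xL xR ≈ -mk xl xr xL xR) ∧ (∀ i, IHxl i) ∧ ∀ j, IHxr j

class Impartial (G : PGame.{u}) : Prop where
  out : ImpartialAux G

noncomputable def grundyValue (x : PGame.{u}) : Nimber.{u} := by
  induction x with | mk xl xr xL xR IHxl IHxr => ?_
  exact sInf (Set.range fun i => IHxl i)ᶜ

end PGame

end SetTheory

open SetTheory PGame

def pgLF (x y : PGame.{u}) : Prop := (leLF x y).2

theorem pg_le_def_lf (x y : PGame.{u}) :
    x ≤ y ↔ (∀ i, pgLF (x.moveLeft i) y) ∧ ∀ j, pgLF x (y.moveRight j) := by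
  cases x; cases y; exact Iff.rfl

theorem pg_lf_def (x y : PGame.{u}) :
    pgLF x y ↔ (∃ i, x ≤ y.moveLeft i) ∨ ∃ j, x.moveRight j ≤ y := by
  cases x; cases y; exact Iff.rfl

theorem pg_lf_iff_aux (x : PGame.{u}) : ∀ y : PGame.{u},
    (x ≤ y ↔ ¬ pgLF y x) ∧ (pgLF x y ↔ ¬ y ≤ x) := by
  induction x with | mk xl xr xL xR IHxl IHxr => ?_
  intro y
  induction y with | mk yl yr yL yR IHyl IHyr => ?_
  constructor
  · rw [pg_le_def_lf (mk xl xr xL xR) (mk yl yr yL yR), pg_lf_def (mk yl yr yL yR) (mk xl xr xL xR),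
      not_or, not_exists, not_exists]
    exact and_congr (forall_congr' fun i => (IHxl i (mk yl yr yL yR)).2)
      (forall_congr' fun j => (IHyr j).2)
  · rw [pg_lf_def (mk xl xr xL xR) (mk yl yr yL yR), pg_le_def_lf (mk yl yr yL yR) (mk xl xr xL xR),
      not_and_or, not_forall, not_forall]
    exact or_congr (exists_congr fun i => (IHyl i).1)
      (exists_congr fun j => (IHxr j (mk yl yr yL yR)).1)

theorem pg_lf_iff_not_le (x y : PGame.{u}) : pgLF x y ↔ ¬ y ≤ x := (pg_lf_iff_aux x y).2

theorem pg_le_def' (x y : PGame.{u}) :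
    x ≤ y ↔ (∀ i, ¬ y ≤ x.moveLeft i) ∧ ∀ j, ¬ y.moveRight j ≤ x := by
  rw [pg_le_def_lf]
  exact and_congr (forall_congr' fun i => pg_lf_iff_not_le _ _)
    (forall_congr' fun j => pg_lf_iff_not_le _ _)

theorem pg_le_trans_aux {x y z : PGame.{u}}
    (h₁ : ∀ i, y ≤ z → z ≤ x.moveLeft i → y ≤ x.moveLeft i)
    (h₂ : ∀ j, z.moveRight j ≤ x → x ≤ y → z.moveRight j ≤ y) (hxy : x ≤ y) (hyz : y ≤ z) :
    x ≤ z := by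
  have a := (pg_le_def' x y).1 hxy
  have b := (pg_le_def' y z).1 hyz
  exact (pg_le_def' x z).2 ⟨fun i h => a.1 i (h₁ i hyz h), fun j h => b.2 j (h₂ j h hxy)⟩

theorem pg_le_trans_all (x : PGame.{u}) : ∀ y z : PGame.{u},
    (x ≤ y → y ≤ z → x ≤ z) ∧ (y ≤ z → z ≤ x → y ≤ x) ∧ (z ≤ x → x ≤ y → z ≤ y) := by
  induction x with | mk xl xr xL xR IHxl IHxr => ?_
  intro y
  induction y with | mk yl yr yL yR IHyl IHyr => ?_
  intro z
  induction z with | mk zl zr zL zR IHzl IHzr => ?_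
  exact ⟨pg_le_trans_aux (fun i => (IHxl i (mk yl yr yL yR) (mk zl zr zL zR)).2.1)
      (fun j => (IHzr j).2.2),
    pg_le_trans_aux (fun i => (IHyl i (mk zl zr zL zR)).2.2)
      (fun j => (IHxr j (mk yl yr yL yR) (mk zl zr zL zR)).1),
    pg_le_trans_aux (fun i => (IHzl i).1) (fun j => (IHyr j (mk zl zr zL zR)).2.1)⟩

theorem pg_le_trans {x y z : PGame.{u}} (h1 : x ≤ y) (h2 : y ≤ z) : x ≤ z :=
  (pg_le_trans_all x y z).1 h1 h2

theorem pg_neg_le_aux (x : PGame.{u}) : ∀ y : PGame.{u},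
    (-y ≤ -x ↔ x ≤ y) ∧ (-x ≤ -y ↔ y ≤ x) := by
  induction x with | mk xl xr xL xR IHxl IHxr => ?_
  intro y
  induction y with | mk yl yr yL yR IHyl IHyr => ?_
  constructor
  · constructor
    · intro h
      have hd := (pg_le_def' _ _).1 h
      exact (pg_le_def' _ _).2 ⟨fun i hi => hd.2 i ((IHxl i (mk yl yr yL yR)).2.2 hi),
        fun j hj => hd.1 j ((IHyr j).2.2 hj)⟩
    · intro h
      have hd := (pg_le_def' _ _).1 h
      exact (pg_le_def' _ _).2 ⟨fun i hi => hd.2 i ((IHyr i).2.1 hi),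
        fun j hj => hd.1 j ((IHxl j (mk yl yr yL yR)).2.1 hj)⟩
  · constructor
    · intro h
      have hd := (pg_le_def' _ _).1 h
      exact (pg_le_def' _ _).2 ⟨fun i hi => hd.2 i ((IHyl i).1.2 hi),
        fun j hj => hd.1 j ((IHxr j (mk yl yr yL yR)).1.2 hj)⟩
    · intro h
      have hd := (pg_le_def' _ _).1 h
      exact (pg_le_def' _ _).2 ⟨fun i hi => hd.2 i ((IHxr i (mk yl yr yL yR)).1.1 hi),
        fun j hj => hd.1 j ((IHyl j).1.1 hj)⟩

theorem pg_neg_le (x y : PGame.{u}) : -y ≤ -x ↔ x ≤ y := (pg_neg_le_aux x y).1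

theorem pg_neg_zero : -(0 : PGame.{u}) = 0 := by
  show mk _ _ _ _ = mk _ _ _ _
  congr 1 <;> funext i <;> exact PEmpty.elim i

theorem pg_neg_add (x : PGame.{u}) : ∀ y : PGame.{u}, -(x + y) = -x + -y := by
  induction x with | mk xl xr xL xR IHxl IHxr => ?_
  intro y
  induction y with | mk yl yr yL yR IHyl IHyr => ?_
  show mk _ _ _ _ = mk _ _ _ _
  congr 1 <;> funext k <;> rcases k with i | j
  · exact IHxr i (mk yl yr yL yR)
  · exact IHyr j
  · exact IHxl i (mk yl yr yL yR)
  · exact IHyl j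

theorem pg_add_mono_right (x : PGame.{u}) : ∀ y z : PGame.{u},
    (x ≤ y → x + z ≤ y + z) ∧ (pgLF x y → pgLF (x + z) (y + z)) := by
  induction x with | mk xl xr xL xR IHxl IHxr => ?_
  intro y
  induction y with | mk yl yr yL yR IHyl IHyr => ?_
  intro z
  induction z with | mk zl zr zL zR IHzl IHzr => ?_
  constructor
  · intro h
    have h' := (pg_le_def_lf _ _).1 h
    rw [pg_le_def_lf]
    constructor
    · rintro (i | k)
      · exact (IHxl i (mk yl yr yL yR) (mk zl zr zL zR)).2 (h'.1 i)
      · rw [pg_lf_def]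
        exact Or.inl ⟨(Sum.inr k : yl ⊕ zl), (IHzl k).1 h⟩
    · rintro (j | k)
      · exact (IHyr j (mk zl zr zL zR)).2 (h'.2 j)
      · rw [pg_lf_def]
        exact Or.inr ⟨(Sum.inr k : xr ⊕ zr), (IHzr k).1 h⟩
  · intro h
    rw [pg_lf_def] at h
    rw [pg_lf_def]
    rcases h with ⟨i, hi⟩ | ⟨j, hj⟩
    · exact Or.inl ⟨(Sum.inl i : yl ⊕ zl), (IHyl i (mk zl zr zL zR)).1 hi⟩
    · exact Or.inr ⟨(Sum.inl j : xr ⊕ zr), (IHxr j (mk yl yr yL yR) (mk zl zr zL zR)).1 hj⟩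

theorem pg_add_mono_left (x : PGame.{u}) : ∀ y z : PGame.{u},
    (x ≤ y → z + x ≤ z + y) ∧ (pgLF x y → pgLF (z + x) (z + y)) := by
  induction x with | mk xl xr xL xR IHxl IHxr => ?_
  intro y
  induction y with | mk yl yr yL yR IHyl IHyr => ?_
  intro z
  induction z with | mk zl zr zL zR IHzl IHzr => ?_
  constructor
  · intro h
    have h' := (pg_le_def_lf _ _).1 h
    rw [pg_le_def_lf]
    constructor
    · rintro (k | i)
      · rw [pg_lf_def]
        exact Or.inl ⟨(Sum.inl k : zl ⊕ yl), (IHzl k).1 h⟩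
      · exact (IHxl i (mk yl yr yL yR) (mk zl zr zL zR)).2 (h'.1 i)
    · rintro (k | j)
      · rw [pg_lf_def]
        exact Or.inr ⟨(Sum.inl k : zr ⊕ xr), (IHzr k).1 h⟩
      · exact (IHyr j (mk zl zr zL zR)).2 (h'.2 j)
  · intro h
    rw [pg_lf_def] at h
    rw [pg_lf_def]
    rcases h with ⟨i, hi⟩ | ⟨j, hj⟩
    · exact Or.inl ⟨(Sum.inr i : zl ⊕ yl), (IHyl i (mk zl zr zL zR)).1 hi⟩
    · exact Or.inr ⟨(Sum.inr j : zr ⊕ xr), (IHxr j (mk yl yr yL yR) (mk zl zr zL zR)).1 hj⟩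

theorem pg_imp_def (x : PGame.{u}) : ImpartialAux x ↔
    (x ≈ -x) ∧ (∀ i, ImpartialAux (x.moveLeft i)) ∧ ∀ j, ImpartialAux (x.moveRight j) := by
  cases x; exact Iff.rfl

theorem pg_sum_sym (G H : PGame.{u}) (hG : ImpartialAux G) (hH : ImpartialAux H) :
    G + H ≤ 0 ↔ 0 ≤ G + H := by
  have eG : G ≤ -G ∧ -G ≤ G := ((pg_imp_def G).1 hG).1
  have eH : H ≤ -H ∧ -H ≤ H := ((pg_imp_def H).1 hH).1
  constructor
  · intro h
    have h1 : 0 ≤ -(G + H) := by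
      have := (pg_neg_le (G + H) 0).2 h
      rwa [pg_neg_zero] at this
    rw [pg_neg_add] at h1
    exact pg_le_trans h1 (pg_le_trans ((pg_add_mono_right (-G) G (-H)).1 eG.2)
      ((pg_add_mono_left (-H) H G).1 eH.2))
  · intro h
    have h1 : -(G + H) ≤ 0 := by
      have := (pg_neg_le 0 (G + H)).2 h
      rwa [pg_neg_zero] at this
    rw [pg_neg_add] at h1
    exact pg_le_trans ((pg_add_mono_right G (-G) H).1 eG.1)
      (pg_le_trans ((pg_add_mono_left H (-H) (-G)).1 eH.1) h1)

theorem pg_le_zero (x : PGame.{u}) : x ≤ 0 ↔ ∀ i, ¬ (0 : PGame.{u}) ≤ x.moveLeft i := by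
  rw [pg_le_def_lf]
  constructor
  · intro h i
    exact (pg_lf_iff_not_le _ _).1 (h.1 i)
  · intro h
    exact ⟨fun i => (pg_lf_iff_not_le _ _).2 (h i), fun j => (show PEmpty.{u+1} from j).elim⟩

theorem pg_mex {ι κ : Type u} (f : ι → Ordinal.{u}) (g : κ → Ordinal.{u}) :
    ((∀ i, f i ≠ sInf (Set.range g)ᶜ) ∧ ∀ j, sInf (Set.range f)ᶜ ≠ g j) ↔
      sInf (Set.range f)ᶜ = sInf (Set.range g)ᶜ := by
  have hne : ∀ {ι : Type u} (f : ι → Ordinal.{u}), (Set.range f)ᶜ.Nonempty := fun f => by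
    by_contra h
    rw [Set.not_nonempty_iff_eq_empty, Set.compl_empty_iff] at h
    have hb := Ordinal.bddAbove_range f
    rw [h] at hb
    exact not_bddAbove_univ hb
  have mem : ∀ {ι : Type u} (f : ι → Ordinal.{u}), sInf (Set.range f)ᶜ ∈ (Set.range f)ᶜ :=
    fun f => csInf_mem (hne f)
  have lt : ∀ {ι : Type u} (f : ι → Ordinal.{u}) (a : Ordinal.{u}),
      a < sInf (Set.range f)ᶜ → a ∈ Set.range f := fun f a h => by
    by_contra h'
    exact absurd (csInf_le' h') (not_le.2 h)
  constructor
  · rintro ⟨h1, h2⟩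
    rcases lt_trichotomy (sInf (Set.range f)ᶜ) (sInf (Set.range g)ᶜ) with h | h | h
    · obtain ⟨j, hj⟩ := lt g _ h
      exact absurd hj.symm (h2 j)
    · exact h
    · obtain ⟨i, hi⟩ := lt f _ h
      exact absurd hi (h1 i)
  · intro e
    exact ⟨fun i hi => mem f ⟨i, hi.trans e.symm⟩, fun j hj => mem g ⟨j, hj.symm.trans e⟩⟩

theorem pg_main_aux (G : PGame.{u}) : ∀ H : PGame.{u}, ImpartialAux G → ImpartialAux H →
    (G + H ≤ 0 ↔ grundyValue G = grundyValue H) := by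
  induction G with | mk gl gr gL gR IHgl IHgr => ?_
  intro H
  induction H with | mk hl hr hL hR IHhl IHhr => ?_
  intro hG hH
  have hG' := (pg_imp_def _).1 hG
  have hH' := (pg_imp_def _).1 hH
  rw [pg_le_zero]
  have key : (∀ k, ¬ (0 : PGame.{u}) ≤ (mk gl gr gL gR + mk hl hr hL hR).moveLeft k) ↔
      (∀ i, grundyValue (gL i) ≠ grundyValue (mk hl hr hL hR)) ∧
        ∀ j, grundyValue (mk gl gr gL gR) ≠ grundyValue (hL j) := by
    constructor
    · intro h
      refine ⟨fun i e => h (Sum.inl i : gl ⊕ hl) ?_, fun j e => h (Sum.inr j : gl ⊕ hl) ?_⟩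
      · exact (pg_sum_sym _ _ (hG'.2.1 i) hH).1 ((IHgl i _ (hG'.2.1 i) hH).2 e)
      · exact (pg_sum_sym _ _ hG (hH'.2.1 j)).1 ((IHhl j hG (hH'.2.1 j)).2 e)
    · rintro ⟨h1, h2⟩ (i | j) h
      · exact h1 i ((IHgl i _ (hG'.2.1 i) hH).1 ((pg_sum_sym _ _ (hG'.2.1 i) hH).2 h))
      · exact h2 j ((IHhl j hG (hH'.2.1 j)).1 ((pg_sum_sym _ _ hG (hH'.2.1 j)).2 h))
  exact key.trans (pg_mex (fun i => grundyValue (gL i)) (fun j => grundyValue (hL j)))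

theorem inevitability_case2 (P₁ P₂ : PGame) [P₁.Impartial] [P₂.Impartial]
    (hL : P₁ + P₂ ≈ 0) :
    grundyValue P₁ = grundyValue P₂ ∧
      grundyValue P₁ = sInf (Set.range fun i => grundyValue (P₁.moveLeft i))ᶜ := by
  refine ⟨?_, ?_⟩
  · have hL' : P₁ + P₂ ≤ 0 ∧ 0 ≤ P₁ + P₂ := hL
    exact (pg_main_aux P₁ P₂ Impartial.out Impartial.out).1 hL'.1
  · cases P₁
    rfl
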